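/- arXiv:1801.08972 — 2 statements merged into one kernel-verified Lean document; each statement's English description precedes it below -/
import Mathlib

section
/- Let r ≥ 2 be an even integer and let G be the cograph with regular balanced cotree T_G(a_1,…,a_{r−1},0 | 0,…,0,b_r), on n = a_1 a_2 ⋯ a_{r−1} b_r vertices. Then for every real number λ with λ ≠ 0 and λ ≠ −b_r, the multiplicity of λ as an eigenvalue of G satisfies m(λ) ≤ a_1 a_2 ⋯ a_{r−2}. -/
open Polynomial

/-- The characteristic polynomial of the adjacency matrix of a finite simple graph. -/
noncomputable def graphCharpoly {V : Type} [Fintype V] (G : SimpleGraph V) : Polynomial ℝ :=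
  letI := Classical.decEq V
  letI : DecidableRel G.Adj := Classical.decRel _
  (SimpleGraph.adjMatrix ℝ G).charpoly

/-- The multiplicity `m(lam)` of `lam` as an eigenvalue of `G`, i.e. its multiplicity as a
root of the characteristic polynomial of the adjacency matrix of `G`. -/
noncomputable def eigMult {V : Type} [Fintype V] (G : SimpleGraph V) (lam : ℝ) : ℕ :=
  (graphCharpoly G).rootMultiplicity lam

/-- The energy of a graph: the sum of the absolute values of the eigenvalues of its
adjacency matrix, counted with multiplicity. -/
noncomputable def graphEnergy {V : Type} [Fintype V] (G : SimpleGraph V) : ℝ :=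
  ((graphCharpoly G).roots.map (fun x => |x|)).sum

/-- The vertex type of the cograph with regular balanced cotree: iterated copies. -/
def copiesVertex : List ℕ → ℕ → Type
  | [], b => Fin b
  | a :: rest, b => Fin a × copiesVertex rest b

instance copiesVertexFintype : ∀ (l : List ℕ) (b : ℕ), Fintype (copiesVertex l b)
  | [], b => inferInstanceAs (Fintype (Fin b))
  | a :: rest, b =>
      haveI := copiesVertexFintype rest b
      inferInstanceAs (Fintype (Fin a × copiesVertex rest b))

/-- `m` pairwise disjoint copies of `H`, with all edges between distinct copies added when
`j = true` (join), and no edges between copies when `j = false` (disjoint union). -/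
def levelGraph {V : Type} (m : ℕ) (H : SimpleGraph V) (j : Bool) : SimpleGraph (Fin m × V) where
  Adj x y := (x.1 = y.1 ∧ H.Adj x.2 y.2) ∨ (x.1 ≠ y.1 ∧ j = true)
  symm := ⟨by
    rintro ⟨i, x⟩ ⟨k, y⟩ (⟨h1, h2⟩ | ⟨h1, h2⟩)
    · exact Or.inl ⟨h1.symm, h2.symm⟩
    · exact Or.inr ⟨fun h => h1 h.symm, h2⟩⟩
  loopless := ⟨by
    rintro ⟨i, x⟩ (⟨_, h⟩ | ⟨h, _⟩)
    · exact H.loopless.irrefl x h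
    · exact h rfl⟩

/-- The complete graph on `b` vertices if `j = true`, the edgeless graph otherwise. -/
def baseGraph (b : ℕ) (j : Bool) : SimpleGraph (Fin b) := if j then ⊤ else ⊥

/-- The cograph `H_0` with regular balanced cotree `T_G(a_1, …, a_{r-1}, 0 | 0, …, 0, b)`,
where `l = [a_1, …, a_{r-1}]`; the top level is a join when `j = true`.  (So the graph `G`
of the paper is `cotreeGraph [a_1, …, a_{r-1}] b_r true`: the levels alternate join/union
starting with a join at depth 0, and the deepest level is a clique `K_{b_r}` exactly when
`r` is odd.) -/
def cotreeGraph : ∀ (l : List ℕ) (b : ℕ) (j : Bool), SimpleGraph (copiesVertex l b)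
  | [], b, j => baseGraph b j
  | a :: rest, b, j => levelGraph a (cotreeGraph rest b (!j)) j

/-!
Splitting off the last level of the cotree exhibits `G` as the lexicographic product `Q[K]` of
the cograph `Q` with cotree `(a_1, …, a_{r-2})` and the complete multipartite graph `K` with
`a_{r-1}` parts of size `b`. On each copy of `K`, a `λ`-eigenvector `x` of `Q[K]` satisfies
`(λ - A_K) x = const`; in `K` this gives `λ x_u = T - P_u + c`, where `P_u` is the sum of `x`
over the part of `u` and `T` the total, so `x` is constant on parts (`λ ≠ 0`) and then
`(λ + b) x_u = T + c` makes it constant on the copy (`λ ≠ -b`). Thus `x` is determined by its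
values at one vertex per copy, and for a symmetric matrix the multiplicity of `λ` is the
dimension of its eigenspace.
-/

open Matrix Module SimpleGraph

theorem Matrix.IsHermitian.rootMultiplicity_charpoly_le_card {𝕜 n ι : Type*} [RCLike 𝕜]
    [Fintype n] [DecidableEq n] [Fintype ι] {A : Matrix n n 𝕜} (hA : A.IsHermitian) {μ : 𝕜}
    (σ : ι → n) (h : ∀ x, A *ᵥ x = μ • x → x ∘ σ = 0 → x = 0) :
    A.charpoly.rootMultiplicity μ ≤ Fintype.card ι := by
  have hsymm : (toEuclideanLin A).IsSymmetric := isSymmetric_toEuclideanLin_iff.mpr hA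
  rw [← charpoly_toLin A (EuclideanSpace.basisFun n 𝕜).toBasis,
    ← toEuclideanLin_eq_toLin_orthonormal, ← LinearMap.finrank_maxGenEigenspace_eq,
    hsymm.isFinitelySemisimple.maxGenEigenspace_eq_eigenspace,
    ← finrank_fintype_fun_eq_card (R := 𝕜)]
  let restrict := LinearMap.funLeft 𝕜 𝕜 σ ∘ₗ
    (WithLp.linearEquiv 2 𝕜 (n → 𝕜)).toLinearMap ∘ₗ (End.eigenspace (toEuclideanLin A) μ).subtype
  refine LinearMap.finrank_le_finrank_of_injective (f := restrict) ?_
  rw [← LinearMap.ker_eq_bot, LinearMap.ker_eq_bot']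
  rintro ⟨x, hx⟩ hσ
  rw [Module.End.mem_eigenspace_iff] at hx
  simpa using h x.ofLp (congrArg WithLp.ofLp hx) hσ

theorem eigMult_eq_rootMultiplicity {V : Type} [Fintype V] [DecidableEq V] (G : SimpleGraph V)
    [DecidableRel G.Adj] (μ : ℝ) :
    eigMult G μ = (G.adjMatrix ℝ).charpoly.rootMultiplicity μ := by
  unfold eigMult graphCharpoly
  congr

theorem SimpleGraph.Iso.eigMult_eq {V W : Type} [Fintype V] [Fintype W] {G : SimpleGraph V}
    {G' : SimpleGraph W} (e : G ≃g G') (μ : ℝ) : eigMult G μ = eigMult G' μ := by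
  classical
  have hadj : G'.adjMatrix ℝ = reindex e.toEquiv e.toEquiv (G.adjMatrix ℝ) := by
    ext v w
    simp only [reindex_apply, submatrix_apply, adjMatrix_apply]
    exact if_congr e.symm.map_adj_iff.symm rfl rfl
  rw [eigMult_eq_rootMultiplicity, eigMult_eq_rootMultiplicity, hadj, charpoly_reindex]

namespace SimpleGraph

variable {B W : Type*}

def lexProd (Q : SimpleGraph B) (H : SimpleGraph W) : SimpleGraph (B × W) where
  Adj x y := Q.Adj x.1 y.1 ∨ (x.1 = y.1 ∧ H.Adj x.2 y.2)
  symm := ⟨fun _ _ h => h.imp Adj.symm fun h => ⟨h.1.symm, h.2.symm⟩⟩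
  loopless := ⟨fun _ h => h.elim Q.irrefl fun h => H.irrefl h.2⟩

@[simp]
theorem lexProd_adj {Q : SimpleGraph B} {H : SimpleGraph W} {x y : B × W} :
    (Q.lexProd H).Adj x y ↔ Q.Adj x.1 y.1 ∨ (x.1 = y.1 ∧ H.Adj x.2 y.2) :=
  Iff.rfl

instance (Q : SimpleGraph B) (H : SimpleGraph W) [DecidableEq B] [DecidableRel Q.Adj]
    [DecidableRel H.Adj] : DecidableRel (Q.lexProd H).Adj :=
  fun _ _ => inferInstanceAs (Decidable (_ ∨ _))

theorem adjMatrix_lexProd_mulVec_apply {α : Type*} [NonAssocSemiring α] [Fintype B] [Fintype W]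
    [DecidableEq B] (Q : SimpleGraph B) (H : SimpleGraph W) [DecidableRel Q.Adj]
    [DecidableRel H.Adj] (x : B × W → α) (β : B) (w : W) :
    ((Q.lexProd H).adjMatrix α *ᵥ x) (β, w) =
      (Q.adjMatrix α *ᵥ fun γ => ∑ w', x (γ, w')) β +
        (H.adjMatrix α *ᵥ fun w' => x (β, w')) w := by
  have hsplit : ∀ γ w', (if Q.Adj β γ ∨ (β = γ ∧ H.Adj w w') then (1 : α) else 0) =
      (if Q.Adj β γ then 1 else 0) + if β = γ then (if H.Adj w w' then 1 else 0) else 0 := by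
    intro γ w'
    by_cases h : β = γ
    · subst h; simp
    · simp [h]
  simp only [mulVec, dotProduct, adjMatrix_apply, Fintype.sum_prod_type, lexProd_adj, hsplit,
    add_mul, Finset.sum_add_distrib, ite_mul, one_mul, zero_mul, Finset.sum_ite_irrel,
    Finset.sum_const_zero, Finset.sum_ite_eq, Finset.mem_univ, if_true]
  congr 1
  exact Finset.sum_congr rfl fun γ _ => by split_ifs <;> simp

def uniqueLexProdIso [Unique B] (Q : SimpleGraph B) (H : SimpleGraph W) : Q.lexProd H ≃g H where
  toEquiv := Equiv.uniqueProd W B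
  map_rel_iff' := by simp [Subsingleton.elim _ (default : B)]

end SimpleGraph

theorem eigMult_lexProd_le_card {B W : Type} [Fintype B] [Fintype W] [Nonempty W]
    (Q : SimpleGraph B) (H : SimpleGraph W) [DecidableRel H.Adj] {μ : ℝ}
    (hH : ∀ (y : W → ℝ) (c : ℝ), (∀ w, μ * y w = (H.adjMatrix ℝ *ᵥ y) w + c) →
      ∀ w w', y w = y w') :
    eigMult (Q.lexProd H) μ ≤ Fintype.card B := by
  classical
  obtain ⟨w₀⟩ := ‹Nonempty W›
  rw [eigMult_eq_rootMultiplicity]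
  refine (isHermitian_adjMatrix ..).rootMultiplicity_charpoly_le_card (fun β => (β, w₀))
    fun x hx hσ => funext fun ⟨β, w⟩ => ?_
  have hblock : ∀ w, μ * x (β, w) = (H.adjMatrix ℝ *ᵥ fun w' => x (β, w')) w +
      (Q.adjMatrix ℝ *ᵥ fun γ => ∑ w', x (γ, w')) β := by
    intro w
    rw [← smul_eq_mul, ← Pi.smul_apply, ← hx, adjMatrix_lexProd_mulVec_apply, add_comm]
  exact (hH _ _ hblock w w₀).trans (congrFun hσ β)

def levelGraphCongr {V V' : Type} (m : ℕ) {H : SimpleGraph V} {H' : SimpleGraph V'}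
    (e : H ≃g H') (j : Bool) : levelGraph m H j ≃g levelGraph m H' j where
  toEquiv := (Equiv.refl _).prodCongr e.toEquiv
  map_rel_iff' := by simp [levelGraph, e.map_adj_iff]

def levelGraphLexProdIso {V W : Type} (m : ℕ) (Q : SimpleGraph V) (H : SimpleGraph W)
    (j : Bool) : levelGraph m (Q.lexProd H) j ≃g (levelGraph m Q j).lexProd H where
  toEquiv := (Equiv.prodAssoc _ _ _).symm
  map_rel_iff' := by
    rintro ⟨i, β, w⟩ ⟨k, γ, w'⟩
    simp only [levelGraph, lexProd_adj, Equiv.prodAssoc_symm_apply, Prod.mk.injEq]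
    tauto

def cotreeGraphAppendIso : ∀ (as bs : List ℕ) (b : ℕ) (j : Bool),
    cotreeGraph (as ++ bs) b j ≃g
      (cotreeGraph as 1 j).lexProd (cotreeGraph bs b (not^[as.length] j))
  | [], _, _, _ => (uniqueLexProdIso (B := Fin 1) _ _).symm
  | a :: rest, bs, b, j =>
    (levelGraphCongr a (cotreeGraphAppendIso rest bs b !j) j).trans
      (levelGraphLexProdIso a _ _ j)

theorem card_copiesVertex :
    ∀ (l : List ℕ) (b : ℕ), Fintype.card (copiesVertex l b) = l.prod * b
  | [], b => Fintype.card_fin b |>.trans (one_mul b).symm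
  | a :: rest, b => by
    rw [List.prod_cons, mul_assoc, ← card_copiesVertex rest b]
    exact Fintype.card_prod (Fin a) (copiesVertex rest b) |>.trans (by rw [Fintype.card_fin])

section CompleteMultipartite

variable {S : Type} [Fintype S] {m : ℕ}
  [DecidableRel (levelGraph m (⊥ : SimpleGraph S) true).Adj]

theorem adjMatrix_levelGraph_bot_mulVec_apply (y : Fin m × S → ℝ) (p : Fin m) (s : S) :
    ((levelGraph m (⊥ : SimpleGraph S) true).adjMatrix ℝ *ᵥ y) (p, s) =
      ∑ w, y w - ∑ t, y (p, t) := by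
  have hterm : ∀ q t, (if (levelGraph m (⊥ : SimpleGraph S) true).Adj (p, s) (q, t) then 1 else 0)
      * y (q, t) = y (q, t) - if p = q then y (q, t) else 0 := by
    intro q t
    by_cases h : p = q <;> simp [levelGraph, h]
  simp only [mulVec, dotProduct, adjMatrix_apply, Fintype.sum_prod_type, hterm,
    Finset.sum_sub_distrib, Finset.sum_ite_irrel, Finset.sum_const_zero, Finset.sum_ite_eq,
    Finset.mem_univ, if_true]

theorem eq_of_sub_adjMatrix_levelGraph_bot_mulVec_eq_const {μ c : ℝ} (hμ : μ ≠ 0)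
    (hμS : μ + Fintype.card S ≠ 0) {y : Fin m × S → ℝ}
    (hy : ∀ w, μ * y w = ((levelGraph m (⊥ : SimpleGraph S) true).adjMatrix ℝ *ᵥ y) w + c)
    (w w' : Fin m × S) : y w = y w' := by
  have hrow : ∀ p s t, y (p, s) = y (p, t) := fun p s t =>
    mul_left_cancel₀ hμ (by rw [hy, hy, adjMatrix_levelGraph_bot_mulVec_apply,
      adjMatrix_levelGraph_bot_mulVec_apply])
  have hpart : ∀ p s, (μ + Fintype.card S) * y (p, s) = ∑ w, y w + c := fun p s => by
    rw [add_mul, hy, adjMatrix_levelGraph_bot_mulVec_apply,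
      Finset.sum_congr rfl fun t _ => hrow p t s, Finset.sum_const, Finset.card_univ, nsmul_eq_mul]
    ring
  obtain ⟨p, s⟩ := w
  obtain ⟨q, t⟩ := w'
  exact mul_left_cancel₀ hμS ((hpart p s).trans (hpart q t).symm)

end CompleteMultipartite

theorem multiplicity_bound_even_regular_balanced_cotree_general
    (r : ℕ) (heven : Even r)
    (as : List ℕ) (al : ℕ) (hlen : (as ++ [al]).length = r - 1)
    (hpos : ∀ a ∈ as ++ [al], 0 < a)
    (b : ℕ) (hb : 2 ≤ b) :
    ∀ lam : ℝ, lam ≠ 0 → lam ≠ -(b : ℝ) →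
      eigMult (cotreeGraph (as ++ [al]) b true) lam ≤ as.prod := by
  intro lam hlam hlamb
  classical
  have hlenEven : Even as.length := by
    obtain ⟨k, rfl⟩ := heven
    exact ⟨k - 1, by simp at hlen; omega⟩
  have : Nonempty (copiesVertex [al] b) := ⟨(⟨0, hpos al (by simp)⟩, ⟨0, by omega⟩)⟩
  calc eigMult (cotreeGraph (as ++ [al]) b true) lam
      = eigMult ((cotreeGraph as 1 true).lexProd (cotreeGraph [al] b true)) lam := by
        simpa [Bool.involutive_not.iterate_even hlenEven] using
          (cotreeGraphAppendIso as [al] b true).eigMult_eq lam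
    _ ≤ Fintype.card (copiesVertex as 1) :=
        eigMult_lexProd_le_card _ _ fun _ _ hy =>
          eq_of_sub_adjMatrix_levelGraph_bot_mulVec_eq_const (S := Fin b) hlam
            (by rwa [Fintype.card_fin, ← sub_neg_eq_add, sub_ne_zero]) hy
    _ = as.prod := by rw [card_copiesVertex, mul_one]

/-- Let `r ≥ 2` be even and let `G` be the cograph with regular balanced cotree
`T_G(a_1, …, a_{r-1}, 0 | 0, …, 0, b)`, where `[a_1, …, a_{r-1}] = as ++ [al]` are positive
and `b ≥ 2`.  Then for every real `lam` with `lam ≠ 0` and `lam ≠ -b`, the multiplicity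
of `lam` as an eigenvalue of `G` satisfies `m(lam) ≤ a_1 a_2 ⋯ a_{r-2}` (an empty product
being `1`). -/
theorem multiplicity_bound_even_regular_balanced_cotree
    (r : ℕ) (hr : 2 ≤ r) (heven : Even r)
    (as : List ℕ) (al : ℕ) (hlen : (as ++ [al]).length = r - 1)
    (hpos : ∀ a ∈ as ++ [al], 0 < a)
    (b : ℕ) (hb : 2 ≤ b) :
    ∀ lam : ℝ, lam ≠ 0 → lam ≠ -(b : ℝ) →
      eigMult (cotreeGraph (as ++ [al]) b true) lam ≤ as.prod :=
  multiplicity_bound_even_regular_balanced_cotree_general r heven as al hlen hpos b hb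
end

section
/- Let p ≥ 1 be an integer and let G = (p+1)K_2 ∨ (p+1)K_2, on n = 4p + 4 vertices. Then every eigenvalue of G is an integer, G is not cospectral with the complete graph K_n (the characteristic polynomials of their adjacency matrices differ), and the energy of G equals the energy of K_n: E(G) = 8p + 6 = 2(n − 1). -/
open Polynomial

/-- The join of two graphs: the disjoint union together with all edges between the parts. -/
def joinG {V W : Type} (G : SimpleGraph V) (H : SimpleGraph W) : SimpleGraph (V ⊕ W) where
  Adj x y := match x, y with
    | Sum.inl a, Sum.inl b => G.Adj a b
    | Sum.inr a, Sum.inr b => H.Adj a b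
    | Sum.inl _, Sum.inr _ => True
    | Sum.inr _, Sum.inl _ => True
  symm := by
    constructor
    rintro (a | a) (c | c) h <;> simp_all [SimpleGraph.adj_comm]
  loopless := by
    constructor
    rintro (a | a) h
    · exact G.irrefl h
    · exact H.irrefl h

/-- `m` pairwise disjoint copies of `H` (no edges between distinct copies). -/
def disjCopies {V : Type} (m : ℕ) (H : SimpleGraph V) : SimpleGraph (Fin m × V) where
  Adj x y := x.1 = y.1 ∧ H.Adj x.2 y.2
  symm := by
    constructor
    rintro ⟨i, x⟩ ⟨k, y⟩ ⟨h1, h2⟩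
    exact ⟨h1.symm, H.adj_symm h2⟩
  loopless := by
    constructor
    rintro ⟨i, x⟩ ⟨_, h⟩
    exact H.irrefl h

/-!
The adjacency matrix of `G ∨ G`, for `G = (p+1)K₂`, is the block matrix `[[A, J], [J, A]]` with
`A = I ⊗ A(K₂)` and `J` the all-ones matrix. Kronecker products of the eigenvectors `𝟙, e₀ - eⱼ`
of all-ones matrices diagonalize `A` and `J` simultaneously, with eigenvalues `±1` for `A` and
`2(p+1)` or `0` for `J`, and then the vectors `(x, ±x)` diagonalize the join, with the sums and
differences of these as eigenvalues: `2p+3`, `-(2p+1)`, `1` (`2p` times) and `-1` (`2p+2` times).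
They are integers with absolute values summing to `8p+6`, while `1` is not an eigenvalue of
`K_{4p+4}`, whose spectrum is `4p+3, -1, …, -1`.
-/

open Matrix Kronecker

theorem Polynomial.roots_finset_prod_X_sub_C {ι R : Type*} [CommRing R] [IsDomain R]
    (s : Finset ι) (f : ι → R) : (∏ i ∈ s, (X - C (f i))).roots = s.val.map f := by
  rw [Finset.prod_eq_multiset_prod, ← roots_multiset_prod_X_sub_C (s.val.map f), Multiset.map_map]
  rfl

namespace Matrix

theorem of_one_kronecker_of_one {ι κ R : Type*} [MulOneClass R] :
    (of 1 : Matrix ι ι R) ⊗ₖ (of 1 : Matrix κ κ R) = of 1 := by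
  ext
  simp

variable {ι κ R K : Type*} [Fintype ι] [DecidableEq ι] [Fintype κ] [DecidableEq κ]

section CommRing

variable [CommRing R]

theorem charpoly_eq_prod_of_mul_eq_mul_diagonal {A P Q : Matrix ι ι R} {d : ι → R}
    (hQP : Q * P = 1) (hAP : A * P = P * diagonal d) :
    A.charpoly = ∏ i, (X - C (d i)) := by
  calc A.charpoly = (A * P * Q).charpoly := by rw [mul_assoc, mul_eq_one_comm.mp hQP, mul_one]
    _ = (Q * (A * P)).charpoly := charpoly_mul_comm _ _
    _ = ∏ i, (X - C (d i)) := by rw [hAP, ← mul_assoc, hQP, one_mul, charpoly_diagonal]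

theorem kronecker_mul_kronecker_eq_mul_diagonal {A P : Matrix ι ι R} {B Q : Matrix κ κ R}
    {d : ι → R} {e : κ → R} (hA : A * P = P * diagonal d) (hB : B * Q = Q * diagonal e) :
    (A ⊗ₖ B) * (P ⊗ₖ Q) = (P ⊗ₖ Q) * diagonal (fun x => d x.1 * e x.2) := by
  rw [← mul_kronecker_mul, hA, hB, mul_kronecker_mul, diagonal_kronecker_diagonal]

theorem kronecker_mul_kronecker_eq_one {P Q : Matrix ι ι R} {P' Q' : Matrix κ κ R}
    (h : Q * P = 1) (h' : Q' * P' = 1) : (Q ⊗ₖ Q') * (P ⊗ₖ P') = 1 := by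
  rw [← mul_kronecker_mul, h, h', one_kronecker_one]

end CommRing

section Ring

variable [Ring R]

theorem sub_mul_eq_mul_diagonal_sub {A B P : Matrix ι ι R} {d e : ι → R}
    (hA : A * P = P * diagonal d) (hB : B * P = P * diagonal e) :
    (A - B) * P = P * diagonal (d - e) := by
  rw [sub_mul, hA, hB, ← mul_sub, diagonal_sub]
  rfl

theorem fromBlocks_mul_fromBlocks_eq_mul_diagonal {A B P : Matrix ι ι R} {d e : ι → R}
    (hA : A * P = P * diagonal d) (hB : B * P = P * diagonal e) :
    fromBlocks A B B A * fromBlocks P P P (-P)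
      = fromBlocks P P P (-P) * diagonal (Sum.elim (fun i => d i + e i) (fun i => d i - e i)) := by
  rw [← fromBlocks_diagonal, fromBlocks_multiply, fromBlocks_multiply, ← diagonal_add,
    ← diagonal_sub]
  simp only [hA, hB, mul_add, mul_sub, mul_neg, neg_mul, mul_zero, add_zero, zero_add]
  congr 1 <;> abel

theorem fromBlocks_mul_fromBlocks_eq_one [Invertible (2 : R)] {P Q : Matrix ι ι R}
    (hQP : Q * P = 1) :
    (⅟2 : R) • fromBlocks Q Q Q (-Q) * fromBlocks P P P (-P) = 1 := by
  rw [smul_mul_assoc, fromBlocks_multiply]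
  simp only [mul_neg, neg_mul, neg_neg, hQP, add_neg_cancel, ← two_smul R (1 : Matrix ι ι R)]
  simp only [fromBlocks_smul, smul_smul, invOf_mul_self, one_smul, smul_zero, fromBlocks_one]

end Ring

section AllOnes

variable (i₀ : ι)

def allOnesEigenvectors [Ring R] : Matrix ι ι R :=
  of fun i j => if j = i₀ then 1 else (if i = i₀ then 1 else 0) - if i = j then 1 else 0

def allOnesEigenvectorsInv [Field K] : Matrix ι ι K :=
  of fun k i => (Fintype.card ι : K)⁻¹ - if k ≠ i₀ ∧ k = i then 1 else 0

theorem sum_allOnesEigenvectors_apply [Ring R] (j : ι) :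
    ∑ i, allOnesEigenvectors (R := R) i₀ i j
      = if j = i₀ then (Fintype.card ι : R) else 0 := by
  by_cases hj : j = i₀ <;> simp [allOnesEigenvectors, hj, Finset.sum_sub_distrib]

theorem of_one_mul_allOnesEigenvectors [Ring R] :
    of 1 * allOnesEigenvectors i₀
      = allOnesEigenvectors i₀ * diagonal (Pi.single i₀ (Fintype.card ι : R)) := by
  ext i j
  rw [mul_apply, mul_diagonal]
  simp only [of_apply, Pi.one_apply, one_mul, sum_allOnesEigenvectors_apply]
  by_cases hj : j = i₀ <;> simp [allOnesEigenvectors, hj]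

theorem allOnesEigenvectorsInv_mul_allOnesEigenvectors [Field K]
    (hcard : (Fintype.card ι : K) ≠ 0) :
    allOnesEigenvectorsInv i₀ * allOnesEigenvectors (R := K) i₀ = 1 := by
  ext k j
  simp only [mul_apply, allOnesEigenvectorsInv, of_apply, sub_mul, Finset.sum_sub_distrib,
    ← Finset.mul_sum, sum_allOnesEigenvectors_apply, ite_mul, one_mul, zero_mul, ite_and]
  rcases eq_or_ne j i₀ with rfl | hj
  · by_cases hk : k = j <;> simp [allOnesEigenvectors, hk, hcard, one_apply]
  · by_cases hk : k = i₀ <;> simp [allOnesEigenvectors, hj, hj.symm, hk, one_apply]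

end AllOnes

end Matrix

section Graph

variable {V : Type}

theorem graphCharpoly_eq_charpoly_adjMatrix [Fintype V] [DecidableEq V] (G : SimpleGraph V)
    [DecidableRel G.Adj] : graphCharpoly G = (G.adjMatrix ℝ).charpoly := by
  unfold graphCharpoly
  congr!

theorem graphEnergy_eq_sum_abs [Fintype V] {G : SimpleGraph V} {ι : Type*} [Fintype ι]
    {f : ι → ℝ} (h : graphCharpoly G = ∏ i, (X - C (f i))) :
    graphEnergy G = ∑ i, |f i| := by
  rw [graphEnergy, h, roots_finset_prod_X_sub_C, Multiset.map_map]
  rfl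

theorem adjMatrix_joinG {R : Type*} {W : Type} [Zero R] [One R] (G : SimpleGraph V)
    (H : SimpleGraph W) [DecidableRel G.Adj] [DecidableRel H.Adj] [DecidableRel (joinG G H).Adj] :
    (joinG G H).adjMatrix R = fromBlocks (G.adjMatrix R) (of 1) (of 1) (H.adjMatrix R) := by
  ext (a | a) (b | b) <;>
    simp only [SimpleGraph.adjMatrix_apply, fromBlocks_apply₁₁, fromBlocks_apply₁₂,
      fromBlocks_apply₂₁, fromBlocks_apply₂₂, of_apply, Pi.one_apply]
  exacts [if_congr Iff.rfl rfl rfl, if_pos trivial, if_pos trivial, if_congr Iff.rfl rfl rfl]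

theorem adjMatrix_disjCopies {R : Type*} [MulZeroOneClass R] (m : ℕ) (H : SimpleGraph V)
    [DecidableRel H.Adj] [DecidableRel (disjCopies m H).Adj] :
    (disjCopies m H).adjMatrix R = (1 : Matrix (Fin m) (Fin m) R) ⊗ₖ H.adjMatrix R := by
  ext ⟨i, x⟩ ⟨j, y⟩
  rw [SimpleGraph.adjMatrix_apply]
  by_cases h : i = j <;> simp [disjCopies, one_apply, h]

theorem adjMatrix_top_mul_allOnesEigenvectors {R : Type*} [Fintype V] [DecidableEq V] [Ring R]
    (i₀ : V) :
    (⊤ : SimpleGraph V).adjMatrix R * allOnesEigenvectors i₀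
      = allOnesEigenvectors i₀ * diagonal (Pi.single i₀ (Fintype.card V : R) - 1) := by
  rw [SimpleGraph.adjMatrix_completeGraph_eq_of_one_sub_one]
  exact sub_mul_eq_mul_diagonal_sub (of_one_mul_allOnesEigenvectors i₀) (by simp)

theorem graphCharpoly_top [Fintype V] [DecidableEq V] (i₀ : V) :
    graphCharpoly (⊤ : SimpleGraph V)
      = ∏ i, (X - C (Pi.single i₀ (Fintype.card V : ℝ) i - 1)) := by
  have hcard : (Fintype.card V : ℝ) ≠ 0 :=
    Nat.cast_ne_zero.mpr (Fintype.card_pos_iff.mpr ⟨i₀⟩).ne'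
  rw [graphCharpoly_eq_charpoly_adjMatrix]
  exact charpoly_eq_prod_of_mul_eq_mul_diagonal
    (allOnesEigenvectorsInv_mul_allOnesEigenvectors i₀ hcard)
    (adjMatrix_top_mul_allOnesEigenvectors i₀)

theorem not_isRoot_one_graphCharpoly_top [Fintype V] [Nonempty V] (hV : Fintype.card V ≠ 2) :
    ¬(graphCharpoly (⊤ : SimpleGraph V)).IsRoot 1 := by
  classical
  rw [graphCharpoly_top (Classical.arbitrary V), isRoot_prod]
  rintro ⟨i, -, hi⟩
  rw [root_X_sub_C, Pi.single_apply] at hi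
  split_ifs at hi
  · exact hV (by exact_mod_cast (by linarith : (Fintype.card V : ℝ) = 2))
  · norm_num at hi

theorem graphCharpoly_joinG_self [Fintype V] [DecidableEq V] {G : SimpleGraph V}
    [DecidableRel G.Adj] {P Q : Matrix V V ℝ} {d e : V → ℝ} (hQP : Q * P = 1)
    (hG : G.adjMatrix ℝ * P = P * diagonal d) (hJ : of 1 * P = P * diagonal e) :
    graphCharpoly (joinG G G)
      = ∏ v, (X - C (Sum.elim (fun i => d i + e i) (fun i => d i - e i) v)) := by
  classical
  rw [graphCharpoly_eq_charpoly_adjMatrix, adjMatrix_joinG]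
  exact charpoly_eq_prod_of_mul_eq_mul_diagonal (fromBlocks_mul_fromBlocks_eq_one hQP)
    (fromBlocks_mul_fromBlocks_eq_mul_diagonal hG hJ)

end Graph

def spectrumJoinCopiesK2 (p : ℕ) : (Fin (p + 1) × Fin 2) ⊕ (Fin (p + 1) × Fin 2) → ℤ :=
  Sum.elim (fun x => (if x.2 = 0 then 1 else -1) + if x = 0 then 2 * p + 2 else 0)
    (fun x => (if x.2 = 0 then 1 else -1) - if x = 0 then 2 * p + 2 else 0)

theorem graphCharpoly_joinG_copies_K2 (p : ℕ) :
    graphCharpoly (joinG (disjCopies (p + 1) (⊤ : SimpleGraph (Fin 2)))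
        (disjCopies (p + 1) (⊤ : SimpleGraph (Fin 2))))
      = ∏ v, (X - C ((spectrumJoinCopiesK2 p v : ℤ) : ℝ)) := by
  classical
  have hQP := kronecker_mul_kronecker_eq_one
    (allOnesEigenvectorsInv_mul_allOnesEigenvectors (K := ℝ) (0 : Fin (p + 1))
      (by simp [Nat.cast_add_one_ne_zero]))
    (allOnesEigenvectorsInv_mul_allOnesEigenvectors (K := ℝ) (0 : Fin 2) (by norm_num))
  have hA := kronecker_mul_kronecker_eq_mul_diagonal
    (by rw [one_mul, diagonal_one, mul_one] :
      (1 : Matrix (Fin (p + 1)) (Fin (p + 1)) ℝ) * allOnesEigenvectors 0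
        = allOnesEigenvectors 0 * diagonal (fun _ => 1))
    (adjMatrix_top_mul_allOnesEigenvectors (R := ℝ) (0 : Fin 2))
  rw [← adjMatrix_disjCopies] at hA
  have hJ := kronecker_mul_kronecker_eq_mul_diagonal
    (of_one_mul_allOnesEigenvectors (R := ℝ) (0 : Fin (p + 1)))
    (of_one_mul_allOnesEigenvectors (R := ℝ) (0 : Fin 2))
  rw [of_one_kronecker_of_one] at hJ
  rw [graphCharpoly_joinG_self hQP hA hJ]
  refine Finset.prod_congr rfl fun v _ => congrArg (fun a => X - C a) ?_
  rcases v with ⟨i, b⟩ | ⟨i, b⟩ <;> by_cases hi : i = 0 <;> fin_cases b <;>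
    simp [spectrumJoinCopiesK2, Pi.single_apply, hi, Prod.ext_iff] <;> ring

theorem spectrumJoinCopiesK2_inl_one_zero {p : ℕ} (hp : p ≠ 0) :
    spectrumJoinCopiesK2 p (.inl (1, 0)) = 1 := by
  simp [spectrumJoinCopiesK2, Prod.ext_iff, Fin.one_eq_zero_iff, hp]

theorem sum_abs_spectrumJoinCopiesK2 (p : ℕ) :
    ∑ v, |(spectrumJoinCopiesK2 p v : ℝ)| = 8 * p + 6 := by
  have hp : (0 : ℝ) ≤ p := p.cast_nonneg
  have h0 : |1 + (2 * (p : ℝ) + 2)| = 2 * p + 3 := by rw [abs_of_pos (by linarith)]; ring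
  have h1 : |1 - (2 * (p : ℝ) + 2)| = 2 * p + 1 := by rw [abs_of_neg (by linarith)]; ring
  simp only [Fintype.sum_sum_type, Fintype.sum_prod_type, Fin.sum_univ_two,
    Fin.sum_univ_succ (n := p), spectrumJoinCopiesK2, Sum.elim_inl, Sum.elim_inr, Prod.ext_iff,
    Prod.fst_zero, Prod.snd_zero, Fin.succ_ne_zero, one_ne_zero, and_true, and_false, ↓reduceIte,
    Int.cast_add, Int.cast_sub, Int.cast_neg, Int.cast_one, Int.cast_natCast, h0, h1,
    Finset.sum_const, Finset.card_univ, Fintype.card_fin, nsmul_eq_mul, Nat.cast_add, Nat.cast_mul,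
    Nat.cast_ofNat]
  ring

/-- Let `p ≥ 1` and let `G = (p+1)K₂ ∨ (p+1)K₂` be the join of two copies of the disjoint
union of `p+1` copies of `K₂`, on `n = 4p + 4` vertices.  Then every eigenvalue of `G` is an
integer, `G` is not cospectral with the complete graph `K_n` (their adjacency matrices have
different characteristic polynomials), and `G` is borderenergetic:
`E(G) = 8p + 6 = 2(n - 1)`. -/
theorem integral_noncospectral_borderenergetic_join_copies_K2 (p : ℕ) (hp : 1 ≤ p) :
    (∀ lam : ℝ,
        (graphCharpoly (joinG (disjCopies (p + 1) (⊤ : SimpleGraph (Fin 2)))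
            (disjCopies (p + 1) (⊤ : SimpleGraph (Fin 2))))).IsRoot lam →
        ∃ z : ℤ, lam = z) ∧
      graphCharpoly (joinG (disjCopies (p + 1) (⊤ : SimpleGraph (Fin 2)))
          (disjCopies (p + 1) (⊤ : SimpleGraph (Fin 2))))
        ≠ graphCharpoly (⊤ : SimpleGraph (Fin (4 * p + 4))) ∧
      graphEnergy (joinG (disjCopies (p + 1) (⊤ : SimpleGraph (Fin 2)))
          (disjCopies (p + 1) (⊤ : SimpleGraph (Fin 2))))
        = 8 * (p : ℝ) + 6 ∧
      (8 * (p : ℝ) + 6) = 2 * (((4 * p + 4 : ℕ) : ℝ) - 1) := by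
  have hG := graphCharpoly_joinG_copies_K2 p
  refine ⟨fun lam hlam => ?_, fun hK => ?_, ?_, by push_cast; ring⟩
  · rw [hG, isRoot_prod] at hlam
    obtain ⟨v, -, hv⟩ := hlam
    exact ⟨spectrumJoinCopiesK2 p v, (root_X_sub_C.mp hv).symm⟩
  · have h1 : (graphCharpoly (⊤ : SimpleGraph (Fin (4 * p + 4)))).IsRoot 1 := by
      rw [← hK, hG, isRoot_prod]
      exact ⟨.inl (1, 0), Finset.mem_univ _, by
        rw [root_X_sub_C, spectrumJoinCopiesK2_inl_one_zero (by omega), Int.cast_one]⟩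
    exact not_isRoot_one_graphCharpoly_top (by simp) h1
  · rw [graphEnergy_eq_sum_abs hG, sum_abs_spectrumJoinCopiesK2]
end
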